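/- Let k ≥ 3 and n = r(k−1) + q with 0 ≤ q ≤ k−2 and n ≥ k. Then there exists a connected graph G on n vertices with κ̄_k(G) = 1 such that e(G) = r·C(k−1, 2) + r − 1 if q = 0, and e(G) = r·C(k−1, 2) + C(q, 2) + r if 1 ≤ q ≤ k−2. Consequently f(n; κ̄_k = 1) ≥ r·C(k−1, 2) + r − 1 if q = 0, and f(n; κ̄_k = 1) ≥ r·C(k−1, 2) + C(q, 2) + r if 1 ≤ q ≤ k−2. -/

import Mathlib

open SimpleGraph

/-- An `S`-Steiner tree in `G`: a subgraph that is a tree and contains `S`. -/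
def SimpleGraph.IsSteinerTree {V : Type*} (G : SimpleGraph V) (S : Set V)
    (T : G.Subgraph) : Prop :=
  S ⊆ T.verts ∧ T.coe.IsTree

/-- `κ(S)`: the maximum number of pairwise internally disjoint `S`-Steiner trees in `G`. -/
noncomputable def SimpleGraph.steinerConn {V : Type*} (G : SimpleGraph V) (S : Set V) : ℕ :=
  sSup {n : ℕ | ∃ f : Fin n → G.Subgraph,
    (∀ i, G.IsSteinerTree S (f i)) ∧
    ∀ i j, i ≠ j →
      (f i).edgeSet ∩ (f j).edgeSet = ∅ ∧ (f i).verts ∩ (f j).verts = S}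

/-- `κ̄ₖ(G) = max {κ(S) : S ⊆ V(G), |S| = k}`, the maximal generalized local connectivity. -/
noncomputable def SimpleGraph.kappaBar {V : Type*} (G : SimpleGraph V) (k : ℕ) : ℕ :=
  sSup {m : ℕ | ∃ S : Finset V, S.card = k ∧ G.steinerConn ↑S = m}

/-- `p` is an ear of the cycle `c` in `G`: a nontrivial path (whose two endpoints may
coincide) meeting `c` exactly in its endpoints. -/
def SimpleGraph.IsEar {V : Type*} (G : SimpleGraph V) {x u v : V}
    (c : G.Walk x x) (p : G.Walk u v) : Prop :=
  0 < p.length ∧ u ∈ c.support ∧ v ∈ c.support ∧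
  p.support.tail.Nodup ∧ (u = v ∨ u ∉ p.support.tail) ∧
  ∀ w ∈ p.support, w ∈ c.support → w = u ∨ w = v

open Finset

/-! The graph is `cliqueChain (k - 1) n`: the vertices `0, …, n - 1` are cut into consecutive
blocks of `k - 1` vertices (the last one of size `q`), each block is a clique, and consecutive blocks
are joined by the single edge `(m - 1, m)` at their common boundary `m`.

A `k`-set `S` does not fit into one block, so it has vertices on both sides of some boundary `m`.
The boundary edge is the only edge leaving `{x | x < m}`, so it lies in every `S`-Steiner tree;
hence no two of them are edge-disjoint, and `κ(S) = 1` since a spanning tree is one of them.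
The edges are counted by charging each one to its larger endpoint. -/

theorem Finset.exists_add_le_of_lt_card {n K : ℕ} (S : Finset (Fin n)) (hS : K < #S) :
    ∃ u ∈ S, ∃ v ∈ S, (u : ℕ) + K ≤ v := by
  have hne : S.Nonempty := card_pos.1 (by omega)
  refine ⟨S.min' hne, S.min'_mem hne, S.max' hne, S.max'_mem hne, ?_⟩
  have : #S ≤ #(Icc (S.min' hne) (S.max' hne)) :=
    card_le_card fun x hx => mem_Icc.2 ⟨S.min'_le x hx, S.le_max' x hx⟩
  rw [Fin.card_Icc] at this
  omega

namespace SimpleGraph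

section

variable {V : Type*} {G : SimpleGraph V} {S : Set V} {T : G.Subgraph}

theorem IsSteinerTree.exists_adj_mem_notMem (hT : G.IsSteinerTree S T) {u v : V} (hu : u ∈ S)
    (hv : v ∈ S) {C : Set V} (huC : u ∈ C) (hvC : v ∉ C) : ∃ x y, T.Adj x y ∧ x ∈ C ∧ y ∉ C := by
  obtain ⟨p⟩ := hT.2.connected.preconnected ⟨u, hT.1 hu⟩ ⟨v, hT.1 hv⟩
  obtain ⟨d, -, hd₁, hd₂⟩ := p.exists_boundary_dart (Subtype.val ⁻¹' C) huC hvC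
  exact ⟨_, _, d.adj, hd₁, hd₂⟩

theorem IsSteinerTree.mem_edgeSet_of_unique_cross (hT : G.IsSteinerTree S T) {u v a b : V}
    (hu : u ∈ S) (hv : v ∈ S) {C : Set V} (huC : u ∈ C) (hvC : v ∉ C)
    (hcross : ∀ x y, G.Adj x y → x ∈ C → y ∉ C → x = a ∧ y = b) : s(a, b) ∈ T.edgeSet := by
  obtain ⟨x, y, hxy, hxC, hyC⟩ := hT.exists_adj_mem_notMem hu hv huC hvC
  obtain ⟨rfl, rfl⟩ := hcross x y hxy.adj_sub hxC hyC
  exact hxy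

theorem Connected.exists_isSteinerTree (hG : G.Connected) (S : Set V) :
    ∃ T, G.IsSteinerTree S T := by
  obtain ⟨F, hFG, hF⟩ := hG.exists_isTree_le
  have hspan := toSubgraph.isSpanning F hFG
  exact ⟨toSubgraph F hFG, fun x _ => hspan x,
    (Subgraph.spanningCoeEquivCoeOfSpanning _ hspan).isTree_iff.1 hF⟩

theorem steinerConn_eq_one (hT : ∃ T, G.IsSteinerTree S T)
    (he : ∃ e, ∀ T, G.IsSteinerTree S T → e ∈ T.edgeSet) : G.steinerConn S = 1 := by
  obtain ⟨T, hT⟩ := hT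
  obtain ⟨e, he⟩ := he
  refine le_antisymm (csSup_le' ?bound) (le_csSup ⟨1, ?bound⟩
    ⟨fun _ => T, fun _ => hT, fun i j hij => absurd (Subsingleton.elim i j) hij⟩)
  rintro m ⟨f, hf, hdisj⟩
  by_contra! hm
  have h01 : (⟨0, by omega⟩ : Fin m) ≠ ⟨1, hm⟩ := by simp [Fin.ext_iff]
  exact Set.eq_empty_iff_forall_notMem.1 (hdisj _ _ h01).1 e ⟨he _ (hf _), he _ (hf _)⟩

theorem kappaBar_eq_one [Fintype V] {k : ℕ} (hk : k ≤ Fintype.card V)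
    (h : ∀ S : Finset V, #S = k → G.steinerConn S = 1) : G.kappaBar k = 1 := by
  obtain ⟨S, -, hS⟩ := exists_subset_card_eq (s := (univ : Finset V)) hk
  have : {m : ℕ | ∃ S : Finset V, #S = k ∧ G.steinerConn S = m} = {1} := by
    ext m
    constructor
    · rintro ⟨S, hS, rfl⟩
      exact h S hS
    · rintro rfl
      exact ⟨S, hS, h S hS⟩
  rw [kappaBar, this, csSup_singleton]

theorem card_edgeFinset_eq_sum_card_lt_adj [LinearOrder V] [Fintype V] [DecidableRel G.Adj] :
    #G.edgeFinset = ∑ j, #{i | i < j ∧ G.Adj i j} := by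
  have : G.edgeFinset =
      ({p : V × V | p.1 < p.2 ∧ G.Adj p.1 p.2} : Finset _).image fun p => s(p.1, p.2) := by
    ext e
    induction e with
    | _ x y =>
      simp only [mem_edgeFinset, mem_edgeSet, mem_image, mem_filter, mem_univ, true_and,
        Prod.exists, Sym2.eq_iff]
      constructor
      · intro hxy
        rcases hxy.ne.lt_or_gt with h | h
        · exact ⟨x, y, ⟨h, hxy⟩, .inl ⟨rfl, rfl⟩⟩
        · exact ⟨y, x, ⟨h, hxy.symm⟩, .inr ⟨rfl, rfl⟩⟩
      · rintro ⟨a, b, ⟨-, hab⟩, ⟨rfl, rfl⟩ | ⟨rfl, rfl⟩⟩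
        exacts [hab, hab.symm]
  rw [this, card_image_of_injOn, card_filter, Fintype.sum_prod_type_right]
  · simp only [card_filter]
  · rintro ⟨a, b⟩ hab ⟨c, d⟩ hcd h
    simp only [coe_filter, mem_univ, true_and] at hab hcd
    rcases Sym2.eq_iff.1 h with ⟨rfl, rfl⟩ | ⟨rfl, rfl⟩
    · rfl
    · exact absurd (hab.1.trans hcd.1) (lt_irrefl _)

end

section

def cliqueChain (K n : ℕ) : SimpleGraph (Fin n) :=
  fromRel fun i j => (i : ℕ) / K = j / K ∨ (i : ℕ) + 1 = j

variable {K n : ℕ}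

instance : DecidableRel (cliqueChain K n).Adj := fun _ _ => by
  unfold cliqueChain; infer_instance

theorem pathGraph_le_cliqueChain : pathGraph n ≤ cliqueChain K n := by
  intro i j hij
  rw [pathGraph_adj] at hij
  exact ⟨fun h => by subst h; omega, hij.imp Or.inr Or.inr⟩

theorem cliqueChain_connected (hn : n ≠ 0) : (cliqueChain K n).Connected := by
  obtain ⟨m, rfl⟩ := Nat.exists_eq_succ_of_ne_zero hn
  exact (pathGraph_connected m).mono pathGraph_le_cliqueChain

theorem cliqueChain_adj_of_lt_of_le (hK : 0 < K) {c : ℕ} {i j : Fin n}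
    (hij : (cliqueChain K n).Adj i j) (hi : (i : ℕ) < c * K) (hj : c * K ≤ j) :
    (i : ℕ) + 1 = c * K ∧ (j : ℕ) = c * K := by
  have hi' : (i : ℕ) / K < c := (Nat.div_lt_iff_lt_mul hK).2 hi
  have hj' : c ≤ (j : ℕ) / K := (Nat.le_div_iff_mul_le hK).2 hj
  obtain ⟨-, (h | h) | (h | h)⟩ := hij <;> omega

theorem cliqueChain_steinerConn (hK : 0 < K) (S : Finset (Fin n)) (hS : K < #S) :
    (cliqueChain K n).steinerConn S = 1 := by
  obtain ⟨u, hu, v, hv, huv⟩ := exists_add_le_of_lt_card S hS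
  set m := ((u : ℕ) / K + 1) * K
  have hum : (u : ℕ) < m := by simpa [m, add_mul] using Nat.lt_div_mul_add (a := u) hK
  have hmv : m ≤ v := by
    have := Nat.div_mul_le_self (u : ℕ) K
    simp only [m, add_mul, one_mul]
    omega
  refine steinerConn_eq_one ((cliqueChain_connected (by omega)).exists_isSteinerTree _)
    ⟨s(⟨m - 1, by omega⟩, ⟨m, by omega⟩), fun T hT => ?_⟩
  refine hT.mem_edgeSet_of_unique_cross (C := {x | (x : ℕ) < m}) hu hv hum (by simpa using hmv)
    fun x y hxy hx hy => ?_
  obtain ⟨hx', hy'⟩ := cliqueChain_adj_of_lt_of_le hK hxy hx (not_lt.1 hy)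
  exact ⟨Fin.ext (show (x : ℕ) = m - 1 by omega), Fin.ext hy'⟩

theorem cliqueChain_kappaBar (hK : 0 < K) (hn : K + 1 ≤ n) :
    (cliqueChain K n).kappaBar (K + 1) = 1 :=
  kappaBar_eq_one (by simpa using hn) fun S hS => cliqueChain_steinerConn hK S (by omega)

/-- The number of neighbours `i < j` of `j` in `cliqueChain K n`: the `j % K` earlier vertices of
its block, plus the boundary edge from the previous block when `j` starts a block. -/
def cliqueChainLowerDegree (K j : ℕ) : ℕ :=
  j % K + if j % K = 0 ∧ j ≠ 0 then 1 else 0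

theorem cliqueChain_lowerNeighbors (hK : 0 < K) (j : Fin n) :
    ({i | i < j ∧ (cliqueChain K n).Adj i j} : Finset (Fin n)) =
      Ico ⟨j - cliqueChainLowerDegree K j, by omega⟩ j := by
  ext i
  have hblock : (i : ℕ) ≤ j → ((i : ℕ) / K = j / K ↔ j / K * K ≤ i) := fun hij =>
    ⟨fun h => h ▸ Nat.div_mul_le_self i K,
      fun h => le_antisymm (Nat.div_le_div_right hij) ((Nat.le_div_iff_mul_le hK).2 h)⟩
  have hdiv := Nat.div_add_mod' (j : ℕ) K
  simp only [mem_filter, mem_univ, true_and, mem_Ico, cliqueChain, fromRel_adj, Fin.lt_def,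
    Fin.le_def, cliqueChainLowerDegree, ne_eq, Fin.ext_iff]
  by_cases hij : (i : ℕ) < j
  · rw [eq_comm (a := (j : ℕ) / K), hblock hij.le]
    generalize (j : ℕ) / K * K = m at hdiv
    split_ifs <;> omega
  · omega

theorem cliqueChainLowerDegree_le (K j : ℕ) : cliqueChainLowerDegree K j ≤ j := by
  have := Nat.mod_le j K
  unfold cliqueChainLowerDegree
  split_ifs <;> omega

theorem cliqueChainLowerDegree_mul_add {c t : ℕ} (ht : t < K) :
    cliqueChainLowerDegree K (c * K + t) = t + if t = 0 ∧ c ≠ 0 then 1 else 0 := by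
  have hK : 0 < K := by omega
  have hcond : (t = 0 ∧ c * K + t ≠ 0) ↔ (t = 0 ∧ c ≠ 0) := by
    constructor <;> rintro ⟨rfl, h⟩ <;> simp_all [hK.ne']
  simp only [cliqueChainLowerDegree, Nat.mul_add_mod', Nat.mod_eq_of_lt ht, hcond]

theorem sum_range_cliqueChainLowerDegree_mul_add {c s : ℕ} (hs : s ≤ K) :
    ∑ t ∈ range s, cliqueChainLowerDegree K (c * K + t) =
      s.choose 2 + if s ≠ 0 ∧ c ≠ 0 then 1 else 0 := by
  rw [sum_congr rfl fun t ht => cliqueChainLowerDegree_mul_add ((mem_range.1 ht).trans_le hs),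
    sum_add_distrib, sum_range_id, Nat.choose_two_right]
  rcases eq_or_ne c 0 with rfl | hc
  · simp
  · simp [hc, sum_ite_eq', Nat.pos_iff_ne_zero]

theorem sum_range_cliqueChainLowerDegree_mul (hK : 0 < K) (r : ℕ) :
    ∑ j ∈ range (r * K), cliqueChainLowerDegree K j = r * K.choose 2 + (r - 1) := by
  induction r with
  | zero => simp
  | succ r ih =>
    rw [Nat.succ_mul, sum_range_add, ih, sum_range_cliqueChainLowerDegree_mul_add le_rfl]
    split_ifs <;> grind

theorem sum_range_cliqueChainLowerDegree {r q : ℕ} (hr : r ≠ 0) (hq : q < K) :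
    ∑ j ∈ range (r * K + q), cliqueChainLowerDegree K j =
      if q = 0 then r * K.choose 2 + r - 1 else r * K.choose 2 + q.choose 2 + r := by
  rw [sum_range_add, sum_range_cliqueChainLowerDegree_mul (by omega),
    sum_range_cliqueChainLowerDegree_mul_add hq.le]
  rcases eq_or_ne q 0 with rfl | hq0
  · rw [if_pos rfl, if_neg fun h => h.1 rfl, Nat.choose_zero_succ]
    omega
  · rw [if_neg hq0, if_pos ⟨hq0, hr⟩]
    omega

theorem cliqueChain_ncard_edgeSet (hK : 0 < K) :
    (cliqueChain K n).edgeSet.ncard = ∑ j ∈ range n, cliqueChainLowerDegree K j := by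
  rw [← coe_edgeFinset, Set.ncard_coe_finset, card_edgeFinset_eq_sum_card_lt_adj,
    ← Fin.sum_univ_eq_sum_range]
  refine sum_congr rfl fun j _ => ?_
  rw [cliqueChain_lowerNeighbors hK, Fin.card_Ico]
  exact Nat.sub_sub_self (cliqueChainLowerDegree_le K j)

end

end SimpleGraph

/-- For `k ≥ 3` and `n = r(k-1) + q` with `0 ≤ q ≤ k-2` and `n ≥ k`, there is
a connected graph on `n` vertices with `κ̄ₖ = 1` and `r·C(k-1,2) + r - 1` edges if `q = 0`,
resp. `r·C(k-1,2) + C(q,2) + r` edges if `1 ≤ q ≤ k-2`; consequently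
`f(n; κ̄ₖ = 1)` is at least this value. -/
theorem stmt_17 (k r q n : ℕ) (hk : 3 ≤ k) (hq : q ≤ k - 2) (hn : n = r * (k - 1) + q)
    (hnk : k ≤ n) :
    (∃ G : SimpleGraph (Fin n), G.Connected ∧ G.kappaBar k = 1 ∧
        G.edgeSet.ncard =
          (if q = 0 then r * (k - 1).choose 2 + r - 1
           else r * (k - 1).choose 2 + q.choose 2 + r)) ∧
    (if q = 0 then r * (k - 1).choose 2 + r - 1
     else r * (k - 1).choose 2 + q.choose 2 + r) ≤
      sSup {m : ℕ | ∃ G : SimpleGraph (Fin n),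
        G.Connected ∧ G.kappaBar k = 1 ∧ G.edgeSet.ncard = m} := by
  obtain ⟨K, rfl⟩ : ∃ K, k = K + 1 := ⟨k - 1, by omega⟩
  rw [Nat.add_sub_cancel] at hn ⊢
  have hK : 0 < K := by omega
  have hr : r ≠ 0 := by rintro rfl; omega
  have hchain : (cliqueChain K n).Connected ∧ (cliqueChain K n).kappaBar (K + 1) = 1 ∧
      (cliqueChain K n).edgeSet.ncard = if q = 0 then r * K.choose 2 + r - 1
        else r * K.choose 2 + q.choose 2 + r :=
    ⟨cliqueChain_connected (by omega), cliqueChain_kappaBar hK hnk, by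
      rw [cliqueChain_ncard_edgeSet hK, hn, sum_range_cliqueChainLowerDegree hr (by omega)]⟩
  refine ⟨⟨_, hchain⟩, le_csSup ⟨n.choose 2, ?_⟩ ⟨_, hchain⟩⟩
  rintro m ⟨G, -, -, rfl⟩
  classical
  simpa [← coe_edgeFinset] using G.card_edgeFinset_le_card_choose_two
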